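/- arXiv:2110.00716 — 7 statements merged into one kernel-verified Lean document; each statement's English description precedes it below -/
import Mathlib

section
/- With K, S, T, C, U as above, the subspace L = ran K + S(ran K) satisfies U(L) ⊆ L, and in fact U(L) = L. -/
open Matrix

/-!
Write `L = ran K + ran (S K)` as the range of the block matrix `[K | S K]`. Since `P K = 1` for the
left inverse `P = K*` and `S² = 1`, one computes `U K = κ S K` and `U S K = κ' K + (κ - κ') S K T`,
where `T = K* S K`, that is `U [K | S K] = [K | S K] Λ` with `Λ = [[0, κ'], [κ, (κ - κ') T]]`.
As `Λ` is invertible, `U(L) = ran ([K | S K] Λ) = L`.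
-/

namespace Matrix

variable {R : Type*} [CommRing R] {m n p n₁ n₂ : Type*}

theorem range_mulVecLin_mul [Fintype n] [Fintype p] (A : Matrix m n R) (B : Matrix n p R) :
    LinearMap.range (A * B).mulVecLin =
      Submodule.map A.mulVecLin (LinearMap.range B.mulVecLin) := by
  rw [mulVecLin_mul, LinearMap.range_comp]

theorem range_mulVecLin_fromCols [Fintype n₁] [Fintype n₂] (A : Matrix m n₁ R)
    (B : Matrix m n₂ R) :
    LinearMap.range (fromCols A B).mulVecLin =
      LinearMap.range A.mulVecLin ⊔ LinearMap.range B.mulVecLin := by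
  apply le_antisymm
  · rintro _ ⟨v, rfl⟩
    rw [mulVecLin_apply, fromCols_mulVec]
    exact Submodule.add_mem_sup ⟨_, rfl⟩ ⟨_, rfl⟩
  · intro w hw
    obtain ⟨_, ⟨x, rfl⟩, _, ⟨y, rfl⟩, rfl⟩ := Submodule.mem_sup.1 hw
    exact ⟨Sum.elim x y, fromCols_mulVec_sumElim A B x y⟩

theorem map_range_mulVecLin_of_mul_eq_mul [Fintype m] [Fintype n] [DecidableEq n]
    {A : Matrix m m R} {B : Matrix m n R} {Λ Λ' : Matrix n n R}
    (hAB : A * B = B * Λ) (hΛ : Λ * Λ' = 1) :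
    Submodule.map A.mulVecLin (LinearMap.range B.mulVecLin) = LinearMap.range B.mulVecLin := by
  have hsurj : LinearMap.range Λ.mulVecLin = ⊤ :=
    LinearMap.range_eq_top.2 fun v => ⟨Λ' *ᵥ v, by simp [mulVec_mulVec, hΛ]⟩
  rw [← range_mulVecLin_mul, hAB, range_mulVecLin_mul, hsurj, Submodule.map_top]

end Matrix

section Walk

variable {𝕜 : Type*} [Field 𝕜] {m q : Type*} [Fintype m] [Fintype q] [DecidableEq m]
  [DecidableEq q]

/-- The matrix `Λ` of `U = S C` on `ran [K | S K]`, in the coordinates `f ⊕ g ↦ K f + S K g`. -/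
def reducedWalkMatrix (κ κ' : 𝕜) (T : Matrix q q 𝕜) : Matrix (q ⊕ q) (q ⊕ q) 𝕜 :=
  fromBlocks 0 (κ' • 1) (κ • 1) ((κ - κ') • T)

theorem reducedWalkMatrix_mul_inverse {κ κ' : 𝕜} (hκ : κ ≠ 0) (hκ' : κ' ≠ 0)
    (T : Matrix q q 𝕜) :
    reducedWalkMatrix κ κ' T * fromBlocks ((κ⁻¹ - κ'⁻¹) • T) (κ⁻¹ • 1) (κ'⁻¹ • 1) 0 = 1 := by
  rw [reducedWalkMatrix, fromBlocks_multiply, ← fromBlocks_one]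
  congr 1
  · simp [hκ']
  · simp
  · simp only [Matrix.smul_mul, Matrix.mul_smul, one_mul, mul_one, smul_smul, ← add_smul]
    convert zero_smul 𝕜 T
    field_simp
    ring
  · simp [hκ]

theorem walk_mul_fromCols {K : Matrix m q 𝕜} {P : Matrix q m 𝕜} (hPK : P * K = 1)
    {S : Matrix m m 𝕜} (hS : S * S = 1) (κ κ' : 𝕜) :
    S * ((κ - κ') • (K * P) + κ' • 1) * fromCols K (S * K) =
      fromCols K (S * K) * reducedWalkMatrix κ κ' (P * S * K) := by
  rw [reducedWalkMatrix, mul_fromCols, fromCols_mul_fromBlocks]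
  congr 1
  · simp only [Matrix.mul_add, Matrix.add_mul, Matrix.mul_smul, Matrix.smul_mul, Matrix.mul_assoc,
      hPK, Matrix.mul_one, Matrix.mul_zero, zero_add]
    module
  · simp only [Matrix.mul_add, Matrix.add_mul, Matrix.mul_smul, Matrix.smul_mul, Matrix.mul_one,
      Matrix.one_mul, ← Matrix.mul_assoc S S, hS]
    simp only [Matrix.mul_assoc]
    module

end Walk

theorem inherited_subspace_invariant_general (m q : ℕ)
    (K : Matrix (Fin m) (Fin q) ℂ) (hK : Kᴴ * K = 1)
    (S : Matrix (Fin m) (Fin m) ℂ) (hS2 : S * S = 1)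
    (κ κ' : ℂ) (hκ : ‖κ‖ = 1) (hκ' : ‖κ'‖ = 1)
    (C : Matrix (Fin m) (Fin m) ℂ) (hC : C = (κ - κ') • (K * Kᴴ) + κ' • 1)
    (U : Matrix (Fin m) (Fin m) ℂ) (hU : U = S * C) :
    Submodule.map U.mulVecLin
        (LinearMap.range K.mulVecLin ⊔
          Submodule.map S.mulVecLin (LinearMap.range K.mulVecLin)) =
      LinearMap.range K.mulVecLin ⊔
        Submodule.map S.mulVecLin (LinearMap.range K.mulVecLin) := by
  have hκ0 : κ ≠ 0 := by rintro rfl; simp at hκ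
  have hκ'0 : κ' ≠ 0 := by rintro rfl; simp at hκ'
  rw [← range_mulVecLin_mul, ← range_mulVecLin_fromCols, hU, hC]
  exact map_range_mulVecLin_of_mul_eq_mul (walk_mul_fromCols hK hS2 κ κ')
    (reducedWalkMatrix_mul_inverse hκ0 hκ'0 _)

/-- The inherited subspace `L = ran K + S(ran K)` is invariant under `U`, and in fact
`U(L) = L`. -/
theorem inherited_subspace_invariant (m q : ℕ)
    (K : Matrix (Fin m) (Fin q) ℂ) (hK : Kᴴ * K = 1)
    (S : Matrix (Fin m) (Fin m) ℂ) (hSU : Sᴴ * S = 1) (hS2 : S * S = 1)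
    (κ κ' : ℂ) (hκ : ‖κ‖ = 1) (hκ' : ‖κ'‖ = 1) (hne : κ ≠ κ')
    (T : Matrix (Fin q) (Fin q) ℂ) (hT : T = Kᴴ * S * K)
    (C : Matrix (Fin m) (Fin m) ℂ) (hC : C = (κ - κ') • (K * Kᴴ) + κ' • 1)
    (U : Matrix (Fin m) (Fin m) ℂ) (hU : U = S * C) :
    Submodule.map U.mulVecLin
        (LinearMap.range K.mulVecLin ⊔
          Submodule.map S.mulVecLin (LinearMap.range K.mulVecLin)) =
      LinearMap.range K.mulVecLin ⊔
        Submodule.map S.mulVecLin (LinearMap.range K.mulVecLin) :=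
  inherited_subspace_invariant_general m q K hK S hS2 κ κ' hκ hκ' C hC U hU
end

section
/- Let K: ℂ^q → ℂ^{2m} with K*K = I_q, S unitary with S² = I, T = K*SK, and define L: ℂ^q ⊕ ℂ^q → ℂ^{2m} by L(f ⊕ g) = Kf + SKg. Then ker L = { f ⊕ g : f + Tg = 0 and Tf + g = 0 }, i.e. ker L equals the kernel of the block matrix [[I, T],[T, I]]. -/
open Matrix

namespace Matrix

variable {m n p R : Type*} [Fintype m]

theorem star_mulVec_dotProduct [Fintype n] [NonUnitalSemiring R] [StarRing R]
    (A : Matrix m n R) (x : n → R) (v : m → R) :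
    star (A *ᵥ x) ⬝ᵥ v = star x ⬝ᵥ (Aᴴ *ᵥ v) := by
  rw [star_mulVec, dotProduct_mulVec]

/-- With `v = A x + B y`, `⟪v, v⟫ = ⟪x, Aᴴ v⟫ + ⟪y, Bᴴ v⟫`: a vector of `range A + range B`
orthogonal to that space vanishes. -/
theorem mulVec_add_mulVec_eq_zero_iff [Fintype n] [Fintype p]
    [PartialOrder R] [NonUnitalRing R] [StarRing R] [StarOrderedRing R] [NoZeroDivisors R]
    (A : Matrix m n R) (B : Matrix m p R) (x : n → R) (y : p → R) :
    A *ᵥ x + B *ᵥ y = 0 ↔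
      Aᴴ *ᵥ (A *ᵥ x + B *ᵥ y) = 0 ∧ Bᴴ *ᵥ (A *ᵥ x + B *ᵥ y) = 0 := by
  refine ⟨fun h => by simp [h], fun ⟨hA, hB⟩ => ?_⟩
  rw [← dotProduct_star_self_eq_zero]
  conv_lhs => rw [star_add, add_dotProduct]
  rw [star_mulVec_dotProduct, star_mulVec_dotProduct, hA, hB, dotProduct_zero, dotProduct_zero,
    add_zero]

end Matrix

/-- The kernel of `L(f ⊕ g) = Kf + SKg` is the kernel of the block matrix
`[[I, T],[T, I]]`: `Kf + SKg = 0 ↔ f + Tg = 0 ∧ Tf + g = 0`. -/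
theorem ker_L_eq_ker_block (m q : ℕ)
    (K : Matrix (Fin m) (Fin q) ℂ) (hK : Kᴴ * K = 1)
    (S : Matrix (Fin m) (Fin m) ℂ) (hSU : Sᴴ * S = 1) (hS2 : S * S = 1)
    (T : Matrix (Fin q) (Fin q) ℂ) (hT : T = Kᴴ * S * K) :
    ∀ f g : Fin q → ℂ,
      K.mulVec f + S.mulVec (K.mulVec g) = 0 ↔
        f + T.mulVec g = 0 ∧ T.mulVec f + g = 0 := by
  have hS : Sᴴ = S := left_inv_eq_right_inv hSU hS2
  have hKSSK : Kᴴ * S * (S * K) = 1 := by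
    rw [Matrix.mul_assoc, ← Matrix.mul_assoc S, hS2, Matrix.one_mul, hK]
  intro f g
  open scoped ComplexOrder in
  rw [mulVec_mulVec, mulVec_add_mulVec_eq_zero_iff, conjTranspose_mul, hS]
  simp only [mulVec_add, mulVec_mulVec, hK, hKSSK, one_mulVec, ← Matrix.mul_assoc, ← hT]
end

section
/- With Λ = [[0, κ'I_q],[κI_q, (κ−κ')T]] where T is a self-adjoint q×q matrix and κ, κ' distinct unit complex numbers, ker(κ'²I − Λ²) equals the kernel of the block matrix [[I, T],[T, I]]. -/
/-!
With `d = κ - κ'`, the matrix `κ'² I - Λ²` factors as `P * [[I, T], [T, I]]`, where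
`P = [[κ'(κ' - κ) I, 0], [-d² T, κ'(κ' - κ) I]]` is block lower triangular with invertible diagonal
blocks as soon as `κ' ≠ 0` and `κ ≠ κ'`; multiplying on the left by `P` does not change the kernel.
-/

open Matrix

variable {n R : Type*} [Fintype n] [DecidableEq n] [CommRing R]

theorem mulVec_mul_eq_zero_iff_of_det_ne_zero [NoZeroDivisors R] {A B : Matrix n n R}
    (hA : A.det ≠ 0) (v : n → R) : (A * B) *ᵥ v = 0 ↔ B *ᵥ v = 0 := by
  rw [← mulVec_mulVec]
  exact ⟨eq_zero_of_mulVec_eq_zero hA, fun h => by rw [h, mulVec_zero]⟩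

theorem det_fromBlocks_smul_one_zero_ne_zero [NoZeroDivisors R] {c : R} (hc : c ≠ 0)
    (C : Matrix n n R) : (fromBlocks (c • 1) 0 C (c • (1 : Matrix n n R))).det ≠ 0 := by
  rw [det_fromBlocks_zero₁₂, det_smul, det_one, mul_one]
  exact mul_ne_zero (pow_ne_zero _ hc) (pow_ne_zero _ hc)

theorem sq_smul_one_sub_mul_self_eq_mul_fromBlocks (T : Matrix n n R) (κ κ' : R) :
    κ' ^ 2 • (1 : Matrix (n ⊕ n) (n ⊕ n) R) -
        fromBlocks 0 (κ' • 1) (κ • 1) ((κ - κ') • T) *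
          fromBlocks 0 (κ' • 1) (κ • 1) ((κ - κ') • T) =
      fromBlocks ((κ' * (κ' - κ)) • 1) 0 (-(κ - κ') ^ 2 • T) ((κ' * (κ' - κ)) • 1) *
        fromBlocks 1 T T 1 := by
  simp only [fromBlocks_multiply, ← fromBlocks_one, fromBlocks_smul, sub_eq_add_neg,
    fromBlocks_neg, fromBlocks_add, fromBlocks_inj, Matrix.mul_smul, Matrix.smul_mul,
    Matrix.mul_one, Matrix.one_mul, Matrix.zero_mul, Matrix.mul_zero, smul_smul, smul_zero,
    zero_add, add_zero]
  refine ⟨?_, ?_, ?_, ?_⟩ <;> module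

theorem ker_sq_eq_ker_block_general (q : ℕ)
    (T : Matrix (Fin q) (Fin q) ℂ)
    (κ κ' : ℂ) (hκ' : ‖κ'‖ = 1) (hne : κ ≠ κ')
    (Λ : Matrix (Fin q ⊕ Fin q) (Fin q ⊕ Fin q) ℂ)
    (hΛ : Λ = Matrix.fromBlocks 0 (κ' • 1) (κ • 1) ((κ - κ') • T)) :
    ∀ v : Fin q ⊕ Fin q → ℂ,
      (κ' ^ 2 • (1 : Matrix (Fin q ⊕ Fin q) (Fin q ⊕ Fin q) ℂ) - Λ * Λ).mulVec v = 0 ↔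
        (Matrix.fromBlocks 1 T T 1).mulVec v = 0 := by
  intro v
  have hκ'0 : κ' ≠ 0 := norm_ne_zero_iff.mp (hκ'.symm ▸ one_ne_zero)
  have hc : κ' * (κ' - κ) ≠ 0 := mul_ne_zero hκ'0 (sub_ne_zero.mpr hne.symm)
  rw [hΛ, sq_smul_one_sub_mul_self_eq_mul_fromBlocks,
    mulVec_mul_eq_zero_iff_of_det_ne_zero (det_fromBlocks_smul_one_zero_ne_zero hc _)]

/-- For `Λ = [[0, κ'I],[κI, (κ-κ')T]]` with `T` self-adjoint and `κ ≠ κ'` unit complex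
numbers, `ker (κ'² I - Λ²)` equals the kernel of the block matrix `[[I, T],[T, I]]`. -/
theorem ker_sq_eq_ker_block (q : ℕ)
    (T : Matrix (Fin q) (Fin q) ℂ) (hT : Tᴴ = T)
    (κ κ' : ℂ) (hκ : ‖κ‖ = 1) (hκ' : ‖κ'‖ = 1) (hne : κ ≠ κ')
    (Λ : Matrix (Fin q ⊕ Fin q) (Fin q ⊕ Fin q) ℂ)
    (hΛ : Λ = Matrix.fromBlocks 0 (κ' • 1) (κ • 1) ((κ - κ') • T)) :
    ∀ v : Fin q ⊕ Fin q → ℂ,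
      (κ' ^ 2 • (1 : Matrix (Fin q ⊕ Fin q) (Fin q ⊕ Fin q) ℂ) - Λ * Λ).mulVec v = 0 ↔
        (Matrix.fromBlocks 1 T T 1).mulVec v = 0 :=
  ker_sq_eq_ker_block_general q T κ κ' hκ' hne Λ hΛ
end

section
/- Let G be a finite connected graph with m edges and n vertices, U = SC where S is the flip-flop shift on the 2m arcs and C = ⊕_u C_u with each C_u unitary having Spec(C_u) ⊆ {κ, κ'} and dim ker(κ − C_u) = p for all u (κ ≠ κ' unit complex numbers, 1 ≤ p ≤ min degree). Then det(λ I_{2m} − U) = (λ² − κ'²)^{m − pn} · det((λ² − κκ')I_{pn} − (κ − κ')λ T), where T = K*SK is the pn×pn discriminant matrix. -/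
/-!
Because `S² = 1`, multiplying `λ - SC` on the left by `λ + κ'S` gives `(λ² - κ'²) - X K*` with
`X = (κ - κ')(λS + κ')K`, while `det (λ + κ'S) = (λ² - κ'²)^m` since `S` is unitarily conjugate
to `m` copies of the `2 × 2` swap. Sylvester's determinant identity trades `X K*` (size `2m`)
for `K* X = (κ - κ')(λT + κ')` (size `pn`), using `K*K = 1`. Cancelling `(λ² - κ'²)^m` proves the
formula for `λ ≠ ±κ'`, and both sides are continuous in `λ`.
-/

open Matrix

section

variable {R : Type*} [CommRing R] {ι ι' : Type*} [Fintype ι] [DecidableEq ι]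

theorem pow_card_mul_det_smul_one_sub_mul_comm [Fintype ι'] [DecidableEq ι'] (t : R)
    (A : Matrix ι ι' R) (B : Matrix ι' ι R) :
    t ^ Fintype.card ι' * (t • 1 - A * B).det = t ^ Fintype.card ι * (t • 1 - B * A).det := by
  have h := congrArg (Polynomial.eval t) (charpoly_mul_comm' A B)
  simpa only [Polynomial.eval_mul, Polynomial.eval_pow, Polynomial.eval_X, eval_charpoly,
    scalar_apply, smul_one_eq_diagonal] using h

theorem det_mul_mul_of_mul_eq_one {P Q : Matrix ι ι R} (hQP : Q * P = 1) (A : Matrix ι ι R) :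
    (P * A * Q).det = A.det := by
  rw [det_mul, det_mul, mul_comm, ← mul_assoc, ← det_mul, hQP, det_one, one_mul]

theorem smul_one_add_smul_mul_mul {P Q : Matrix ι ι R} (hPQ : P * Q = 1) (t c : R)
    (A : Matrix ι ι R) : t • 1 + c • (P * A * Q) = P * (t • 1 + c • A) * Q := by
  rw [mul_add, add_mul, Matrix.mul_smul, Matrix.smul_mul, mul_one, hPQ, Matrix.mul_smul,
    Matrix.smul_mul]

theorem conj_mul_self {P Q : Matrix ι ι R} (hQP : Q * P = 1) (A : Matrix ι ι R) :
    P * A * Q * (P * A * Q) = P * (A * A) * Q := by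
  simp only [Matrix.mul_assoc]
  rw [← Matrix.mul_assoc Q, hQP, Matrix.one_mul]

/-- The flip-flop shift on the arcs `Fin 2 × o`, in a basis where the two arcs of each edge are
adjacent. -/
def flipFlop (o : Type*) [DecidableEq o] (R : Type*) [Zero R] [One R] :
    Matrix (Fin 2 × o) (Fin 2 × o) R :=
  blockDiagonal fun _ : o => !![0, 1; 1, 0]

theorem flipFlop_mul_self (o : Type*) [Fintype o] [DecidableEq o] :
    flipFlop o R * flipFlop o R = 1 := by
  rw [flipFlop, ← blockDiagonal_mul, ← blockDiagonal_one]
  refine congrArg blockDiagonal (funext fun _ => ?_)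
  ext i j
  fin_cases i <;> fin_cases j <;> simp [mul_apply, Fin.sum_univ_two]

theorem det_smul_one_add_smul_flipFlop (o : Type*) [Fintype o] [DecidableEq o] (t c : R) :
    (t • 1 + c • flipFlop o R).det = (t ^ 2 - c ^ 2) ^ Fintype.card o := by
  have hblocks : t • 1 + c • flipFlop o R = blockDiagonal fun _ : o => !![t, c; c, t] := by
    rw [flipFlop, ← blockDiagonal_one, ← blockDiagonal_smul, ← blockDiagonal_smul,
      ← blockDiagonal_add]
    refine congrArg blockDiagonal (funext fun _ => ?_)
    ext i j
    fin_cases i <;> fin_cases j <;> simp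
  rw [hblocks, det_blockDiagonal, Finset.prod_const, det_fin_two_of, Finset.card_univ]
  ring

theorem smul_one_add_smul_mul_smul_one_sub_mul [Fintype ι'] {S : Matrix ι ι R} (hS : S * S = 1)
    (K : Matrix ι ι' R) (L : Matrix ι' ι R) (t c c' : R) :
    (t • 1 + c' • S) * (t • 1 - S * ((c - c') • (K * L) + c' • 1)) =
      (t ^ 2 - c' ^ 2) • 1 - ((c - c') • (t • S + c' • 1) * K) * L := by
  have hSSK : S * (S * (K * L)) = K * L := by rw [← mul_assoc, hS, one_mul]
  simp only [Matrix.mul_sub, Matrix.mul_add, Matrix.add_mul, Matrix.smul_mul, Matrix.mul_smul,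
    Matrix.mul_one, Matrix.one_mul, smul_add, smul_smul, Matrix.mul_assoc, hS, hSSK]
  module

theorem smul_one_sub_mul_smul_mul [DecidableEq ι'] {K : Matrix ι ι' R} {L : Matrix ι' ι R}
    (hLK : L * K = 1) (S : Matrix ι ι R) (t c c' : R) :
    (t ^ 2 - c' ^ 2) • 1 - L * ((c - c') • (t • S + c' • 1) * K) =
      (t ^ 2 - c * c') • 1 - ((c - c') * t) • (L * S * K) := by
  simp only [Matrix.mul_smul, Matrix.smul_mul, Matrix.add_mul, Matrix.mul_add, Matrix.one_mul,
    Matrix.mul_assoc, hLK, smul_add, smul_smul]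
  module

theorem det_smul_one_add_smul_mul_spectral_mapping [Fintype ι'] [DecidableEq ι']
    {S : Matrix ι ι R} (hS : S * S = 1) {K : Matrix ι ι' R} {L : Matrix ι' ι R} (hLK : L * K = 1)
    (t c c' : R) :
    (t • 1 + c' • S).det *
        ((t ^ 2 - c' ^ 2) ^ Fintype.card ι' * (t • 1 - S * ((c - c') • (K * L) + c' • 1)).det) =
      (t ^ 2 - c' ^ 2) ^ Fintype.card ι *
        ((t ^ 2 - c * c') • 1 - ((c - c') * t) • (L * S * K)).det := by
  rw [mul_left_comm, ← det_mul, smul_one_add_smul_mul_smul_one_sub_mul hS,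
    pow_card_mul_det_smul_one_sub_mul_comm, smul_one_sub_mul_smul_mul hLK]

end

theorem spectral_mapping_det_general (m n p : ℕ)
    (K : Matrix (Fin 2 × Fin m) (Fin (p * n)) ℂ) (hK : Kᴴ * K = 1)
    (S : Matrix (Fin 2 × Fin m) (Fin 2 × Fin m) ℂ)
    (hS : ∃ P : Matrix (Fin 2 × Fin m) (Fin 2 × Fin m) ℂ, Pᴴ * P = 1 ∧
      S = P * Matrix.blockDiagonal (fun _ : Fin m => !![(0 : ℂ), 1; 1, 0]) * Pᴴ)
    (κ κ' : ℂ)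
    (T : Matrix (Fin (p * n)) (Fin (p * n)) ℂ) (hT : T = Kᴴ * S * K)
    (C : Matrix (Fin 2 × Fin m) (Fin 2 × Fin m) ℂ)
    (hC : C = (κ - κ') • (K * Kᴴ) + κ' • 1)
    (U : Matrix (Fin 2 × Fin m) (Fin 2 × Fin m) ℂ) (hU : U = S * C) :
    ∀ lam : ℂ,
      (lam ^ 2 - κ' ^ 2) ^ (p * n) * (lam • (1 : Matrix (Fin 2 × Fin m) (Fin 2 × Fin m) ℂ) - U).det =
        (lam ^ 2 - κ' ^ 2) ^ m *
          ((lam ^ 2 - κ * κ') • (1 : Matrix (Fin (p * n)) (Fin (p * n)) ℂ)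
            - ((κ - κ') * lam) • T).det := by
  obtain ⟨P, hP, hSP⟩ := hS
  change S = P * flipFlop (Fin m) ℂ * Pᴴ at hSP
  have hPP : P * Pᴴ = 1 := mul_eq_one_comm.mp hP
  have hSS : S * S = 1 := by
    rw [hSP, conj_mul_self hP, flipFlop_mul_self, Matrix.mul_one, hPP]
  have hdetS (t c : ℂ) : (t • 1 + c • S).det = (t ^ 2 - c ^ 2) ^ m := by
    rw [hSP, smul_one_add_smul_mul_mul hPP, det_mul_mul_of_mul_eq_one hP,
      det_smul_one_add_smul_flipFlop, Fintype.card_fin]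
  subst hT hC hU
  refine funext_iff.mp (Continuous.ext_on ((Set.toFinite {κ', -κ'}).countable.dense_compl ℂ)
    (by fun_prop) (by fun_prop) fun t ht => ?_)
  have ha : t ^ 2 - κ' ^ 2 ≠ 0 := by
    simpa [sub_eq_zero, sq_eq_sq_iff_eq_or_eq_neg, not_or] using ht
  refine mul_left_cancel₀ (pow_ne_zero m ha) ?_
  calc _ = (t ^ 2 - κ' ^ 2) ^ (2 * m) *
        ((t ^ 2 - κ * κ') • 1 - ((κ - κ') * t) • (Kᴴ * S * K)).det := by
        rw [← hdetS]
        simpa only [Fintype.card_prod, Fintype.card_fin] using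
          det_smul_one_add_smul_mul_spectral_mapping hSS hK t κ κ'
    _ = _ := by ring

/-- Spectral mapping determinant formula (Theorem 5.1): for the quantum walk `U = SC`
on a graph with `m` edges and `n` vertices, with boundary operator `K` (an isometry),
flip-flop shift `S`, coin `C = (κ-κ')KK* + κ'I`, and discriminant `T = K*SK`,
`det(λ - U) = (λ² - κ'²)^{m - pn} det((λ² - κκ') - (κ-κ')λ T)`, written here in the
polynomial-identity form multiplied through by `(λ² - κ'²)^{pn}`. -/
theorem spectral_mapping_det (m n p : ℕ) (hp : 1 ≤ p)
    (K : Matrix (Fin 2 × Fin m) (Fin (p * n)) ℂ) (hK : Kᴴ * K = 1)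
    (S : Matrix (Fin 2 × Fin m) (Fin 2 × Fin m) ℂ)
    (hS : ∃ P : Matrix (Fin 2 × Fin m) (Fin 2 × Fin m) ℂ, Pᴴ * P = 1 ∧
      S = P * Matrix.blockDiagonal (fun _ : Fin m => !![(0 : ℂ), 1; 1, 0]) * Pᴴ)
    (κ κ' : ℂ) (hκ : ‖κ‖ = 1) (hκ' : ‖κ'‖ = 1) (hne : κ ≠ κ')
    (T : Matrix (Fin (p * n)) (Fin (p * n)) ℂ) (hT : T = Kᴴ * S * K)
    (C : Matrix (Fin 2 × Fin m) (Fin 2 × Fin m) ℂ)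
    (hC : C = (κ - κ') • (K * Kᴴ) + κ' • 1)
    (U : Matrix (Fin 2 × Fin m) (Fin 2 × Fin m) ℂ) (hU : U = S * C) :
    ∀ lam : ℂ,
      (lam ^ 2 - κ' ^ 2) ^ (p * n) * (lam • (1 : Matrix (Fin 2 × Fin m) (Fin 2 × Fin m) ℂ) - U).det =
        (lam ^ 2 - κ' ^ 2) ^ m *
          ((lam ^ 2 - κ * κ') • (1 : Matrix (Fin (p * n)) (Fin (p * n)) ℂ)
            - ((κ - κ') * lam) • T).det :=
  spectral_mapping_det_general m n p K hK S hS κ κ' T hT C hC U hU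
end

section
/- Let σ be the 2d×2d permutation matrix acting as the transposition (2j−1 ↔ 2j) in each consecutive pair, and Gr(2d) = (2/(2d))J − I the 2d-dimensional Grover matrix (J the all-ones matrix). Then C'_d := σ·Gr(2d) satisfies: Spec(C'_d) = {1, −1}, dim ker(I − C'_d) = d + 1, and dim ker(I + C'_d) = d − 1, for d ≥ 2. -/
/-!
`σ` and `Gr` are commuting involutions: `σ` is a permutation matrix, hence commutes with the
all-ones matrix `J`, and `Gr` is the reflection in the hyperplane orthogonal to the all-ones
vector. So `C' = σ Gr` is an involution, `ℂ^{2d}` splits into its `±1`-eigenspaces, and their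
dimensions `p, q` are determined by `p + q = 2d` and `p - q = tr C' = tr J / d - tr σ = 2 - 0`,
the latter because `(1 + C') / 2` is the projection onto the `+1`-eigenspace.
-/

open Matrix

open LinearMap (ker)

section Involution

variable {K V : Type*} [Field K] [AddCommGroup V] [Module K V] {f : Module.End K V}

theorem isProj_ker_one_sub_of_mul_self_eq_one (h2 : (2 : K) ≠ 0) (hf : f * f = 1) :
    LinearMap.IsProj (ker (1 - f)) ((2⁻¹ : K) • (1 + f)) where
  map_mem x := by
    have hx : f (f x) = x := LinearMap.congr_fun hf x
    simp only [LinearMap.mem_ker, LinearMap.sub_apply, LinearMap.smul_apply, LinearMap.add_apply,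
      Module.End.one_apply, smul_add, map_smul, map_add, hx]
    module
  map_id x hx := by
    have hx : x = f x := sub_eq_zero.mp (LinearMap.mem_ker.mp hx)
    simp only [LinearMap.smul_apply, LinearMap.add_apply, Module.End.one_apply, ← hx]
    rw [← two_smul K x, smul_smul, inv_mul_cancel₀ h2, one_smul]

theorem isCompl_ker_one_sub_ker_one_add (h2 : (2 : K) ≠ 0) (hf : f * f = 1) :
    IsCompl (ker (1 - f)) (ker (1 + f)) := by
  have h := (isProj_ker_one_sub_of_mul_self_eq_one h2 hf).isCompl
  rwa [LinearMap.ker_smul _ _ (inv_ne_zero h2)] at h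

theorem two_mul_finrank_ker_one_sub [FiniteDimensional K V] (h2 : (2 : K) ≠ 0) (hf : f * f = 1) :
    2 * (Module.finrank K (ker (1 - f)) : K) = Module.finrank K V + LinearMap.trace K V f := by
  have htrace := (isProj_ker_one_sub_of_mul_self_eq_one h2 hf).trace
  rw [map_smul, map_add, LinearMap.trace_one, smul_eq_mul] at htrace
  rw [← htrace, ← mul_assoc, mul_inv_cancel₀ h2, one_mul]

theorem spectrum_subset_of_mul_self_eq_one {A : Type*} [Ring A] [Algebra K A] {a : A}
    (ha : a * a = 1) : spectrum K a ⊆ {1, -1} := by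
  intro μ hμ
  have hμ2 := spectrum.pow_image_subset a 2 ⟨μ, hμ, rfl⟩
  rw [sq a, ha, ← map_one (algebraMap K A), spectrum.mem_iff, ← map_sub] at hμ2
  have hsq : μ ^ 2 - 1 = 0 := by
    by_contra hne
    exact hμ2 ((IsUnit.mk0 _ hne).map _)
  simpa [sub_eq_zero] using hsq

theorem spectrum_eq_of_mul_self_eq_one [FiniteDimensional K V] (hf : f * f = 1)
    (h₁ : ker (1 - f) ≠ ⊥) (h₂ : ker (1 + f) ≠ ⊥) : spectrum K f = {1, -1} := by
  refine (spectrum_subset_of_mul_self_eq_one hf).antisymm ?_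
  rintro μ (rfl | rfl) <;> rw [spectrum.mem_iff, LinearMap.isUnit_iff_ker_eq_bot]
  · rwa [map_one]
  · rwa [map_neg, map_one, ← neg_add', LinearMap.ker_neg]

end Involution

namespace Matrix

variable {K n : Type*} [Field K] [Fintype n] [DecidableEq n] {A : Matrix n n K}

theorem mulVecLin_mul_self_eq_one (hA : A * A = 1) : A.mulVecLin * A.mulVecLin = 1 := by
  rw [Module.End.mul_eq_comp, ← mulVecLin_mul, hA, mulVecLin_one, Module.End.one_eq_id]

theorem mulVecLin_one_sub : (1 - A).mulVecLin = 1 - A.mulVecLin := by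
  rw [← toLin'_apply', map_sub, toLin'_one, Module.End.one_eq_id, toLin'_apply']

theorem mulVecLin_one_add : (1 + A).mulVecLin = 1 + A.mulVecLin := by
  rw [mulVecLin_add, mulVecLin_one, Module.End.one_eq_id]

theorem two_mul_finrank_ker_one_sub_mulVecLin (h2 : (2 : K) ≠ 0) (hA : A * A = 1) :
    2 * (Module.finrank K (ker (1 - A).mulVecLin) : K) = Fintype.card n + A.trace := by
  rw [mulVecLin_one_sub, two_mul_finrank_ker_one_sub h2 (mulVecLin_mul_self_eq_one hA),
    Module.finrank_fintype_fun_eq_card, ← toLin'_apply', trace_toLin'_eq]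

theorem finrank_ker_one_sub_add_finrank_ker_one_add_mulVecLin (h2 : (2 : K) ≠ 0)
    (hA : A * A = 1) :
    Module.finrank K (ker (1 - A).mulVecLin) + Module.finrank K (ker (1 + A).mulVecLin) =
      Fintype.card n := by
  rw [mulVecLin_one_sub, mulVecLin_one_add, ← Module.finrank_fintype_fun_eq_card K]
  exact Submodule.finrank_add_eq_of_isCompl
    (isCompl_ker_one_sub_ker_one_add h2 (mulVecLin_mul_self_eq_one hA))

theorem spectrum_eq_of_mul_self_eq_one (hA : A * A = 1) (h₁ : ker (1 - A).mulVecLin ≠ ⊥)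
    (h₂ : ker (1 + A).mulVecLin ≠ ⊥) : spectrum K A = {1, -1} := by
  rw [mulVecLin_one_sub] at h₁
  rw [mulVecLin_one_add] at h₂
  rw [← spectrum_toLin', toLin'_apply']
  exact _root_.spectrum_eq_of_mul_self_eq_one (mulVecLin_mul_self_eq_one hA) h₁ h₂

end Matrix

section Coin

variable {R ι n : Type*} [CommRing R] [Fintype ι] [DecidableEq ι] [Fintype n]

def allOnes (n R : Type*) [One R] : Matrix n n R := of fun _ _ => 1

def pairSwap (R ι : Type*) [Zero R] [One R] [DecidableEq ι] :
    Matrix (Fin 2 × ι) (Fin 2 × ι) R :=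
  blockDiagonal fun _ => !![0, 1; 1, 0]

theorem allOnes_mul_allOnes : allOnes n R * allOnes n R = (Fintype.card n : R) • allOnes n R := by
  ext; simp [allOnes, mul_apply]

theorem trace_allOnes : (allOnes n R).trace = Fintype.card n := by
  simp [allOnes, trace]

theorem smul_allOnes_sub_one_mul_self [DecidableEq n] {c : R} (hc : c * Fintype.card n = 2) :
    (c • allOnes n R - 1) * (c • allOnes n R - 1) = 1 := by
  rw [sub_mul, mul_sub, mul_sub, smul_mul_smul_comm, allOnes_mul_allOnes, smul_smul, mul_assoc,
    hc]
  simp only [mul_one, one_mul]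
  module

theorem pairSwap_mul_self : pairSwap R ι * pairSwap R ι = 1 := by
  rw [pairSwap, ← blockDiagonal_mul, ← blockDiagonal_one]
  congr 1
  ext1
  simp [← one_fin_two]

theorem pairSwap_mul_allOnes : pairSwap R ι * allOnes _ R = allOnes _ R := by
  ext ⟨i, j⟩ ⟨k, l⟩
  fin_cases i <;> simp [pairSwap, allOnes, mul_apply, Fintype.sum_prod_type, blockDiagonal_apply]

theorem allOnes_mul_pairSwap : allOnes _ R * pairSwap R ι = allOnes _ R := by
  ext ⟨i, j⟩ ⟨k, l⟩
  fin_cases k <;> simp [pairSwap, allOnes, mul_apply, Fintype.sum_prod_type, blockDiagonal_apply]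

theorem trace_pairSwap : (pairSwap R ι).trace = 0 := by
  simp [pairSwap, trace_blockDiagonal]

theorem commute_pairSwap_smul_allOnes_sub_one (c : R) :
    Commute (pairSwap R ι) (c • allOnes _ R - 1) :=
  (Commute.smul_right (pairSwap_mul_allOnes.trans allOnes_mul_pairSwap.symm) c).sub_right
    (Commute.one_right _)

theorem pairSwap_mul_smul_allOnes_sub_one_mul_self {c : R}
    (hc : c * Fintype.card (Fin 2 × ι) = 2) :
    (pairSwap R ι * (c • allOnes _ R - 1)) * (pairSwap R ι * (c • allOnes _ R - 1)) = 1 := by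
  rw [(commute_pairSwap_smul_allOnes_sub_one c).symm.mul_mul_mul_comm, pairSwap_mul_self,
    smul_allOnes_sub_one_mul_self hc, one_mul]

theorem trace_pairSwap_mul_smul_allOnes_sub_one (c : R) :
    (pairSwap R ι * (c • allOnes _ R - 1)).trace = c * Fintype.card (Fin 2 × ι) := by
  rw [mul_sub, Matrix.mul_smul, pairSwap_mul_allOnes, mul_one, trace_sub, trace_smul,
    trace_allOnes, trace_pairSwap, sub_zero, smul_eq_mul]

end Coin

/-- For `C'_d = σ · Gr(2d)` with `σ` the pairwise swap and `Gr(2d)` the Grover matrix,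
the spectrum is `{1, -1}` with `dim ker(I - C') = d + 1` and `dim ker(I + C') = d - 1`. -/
theorem moving_shift_coin_spectrum (d : ℕ) (hd : 2 ≤ d)
    (σ Gr C' : Matrix (Fin 2 × Fin d) (Fin 2 × Fin d) ℂ)
    (hσ : σ = Matrix.blockDiagonal (fun _ : Fin d => !![(0 : ℂ), 1; 1, 0]))
    (hGr : Gr = ((2 : ℂ) / (2 * d)) • Matrix.of (fun _ _ => (1 : ℂ)) - 1)
    (hC' : C' = σ * Gr) :
    spectrum ℂ C' = {1, -1} ∧
      Module.finrank ℂ (LinearMap.ker (1 - C').mulVecLin) = d + 1 ∧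
      Module.finrank ℂ (LinearMap.ker (1 + C').mulVecLin) = d - 1 := by
  have hd0 : (d : ℂ) ≠ 0 := Nat.cast_ne_zero.mpr (by omega)
  have hc : (2 / (2 * d) : ℂ) * Fintype.card (Fin 2 × Fin d) = 2 := by
    simp only [Fintype.card_prod, Fintype.card_fin, Nat.cast_mul, Nat.cast_ofNat]
    field_simp
  have hC'C' : C' * C' = 1 := by
    subst hC' hσ hGr
    exact pairSwap_mul_smul_allOnes_sub_one_mul_self hc
  have htrace : C'.trace = 2 := by
    subst hC' hσ hGr
    exact (trace_pairSwap_mul_smul_allOnes_sub_one _).trans hc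
  have hplus : Module.finrank ℂ (ker (1 - C').mulVecLin) = d + 1 := by
    have h := two_mul_finrank_ker_one_sub_mulVecLin two_ne_zero hC'C'
    simp only [htrace, Fintype.card_prod, Fintype.card_fin, Nat.cast_mul, Nat.cast_ofNat] at h
    apply Nat.cast_injective (R := ℂ)
    push_cast
    linear_combination h / 2
  have hminus : Module.finrank ℂ (ker (1 + C').mulVecLin) = d - 1 := by
    have h := finrank_ker_one_sub_add_finrank_ker_one_add_mulVecLin two_ne_zero hC'C'
    simp only [Fintype.card_prod, Fintype.card_fin] at h
    omega
  refine ⟨Matrix.spectrum_eq_of_mul_self_eq_one hC'C' ?_ ?_, hplus, hminus⟩ <;>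
    rw [Ne, ← Submodule.finrank_eq_zero] <;> omega
end

section
/- With C'_d = σ·Gr(2d) as above and ω = e^{2πi/d}, the d−1 vectors v_ℓ = (1/√(2d))·[1, ω^ℓ, …, ω^{(d−1)ℓ}]^⊤ ⊗ [1, 1]^⊤ for ℓ = 1, …, d−1 form an orthonormal basis of ker(−1 − C'_d). -/
/-!
`C'_d x = (∑ x / d) • 𝟙 - σ x`, so `C'_d x = -x` exactly when `x` is invariant under the coin
swap and has total sum zero, i.e. `x = y ⊗ [1, 1]` with `∑ y = 0`. By Fourier inversion on
`ℤ/d` such `y` are exactly the combinations of the non-trivial characters `j ↦ ω^(ℓ j)`,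
`0 < ℓ < d`, and these are orthonormal (after normalisation) by orthogonality of characters.
-/

open Matrix Finset

section SwapCoin

variable {ι : Type*} [Fintype ι] [DecidableEq ι]

lemma blockDiagonal_swap_mulVec_apply {R : Type*} [NonAssocSemiring R] (x : Fin 2 × ι → R)
    (s : Fin 2) (j : ι) :
    (blockDiagonal (fun _ : ι => !![(0 : R), 1; 1, 0]) *ᵥ x) (s, j) = x (1 - s, j) := by
  fin_cases s <;>
    simp [mulVec, dotProduct, Fintype.sum_prod_type, blockDiagonal_apply, Fin.sum_univ_two]

lemma smul_of_one_sub_one_mulVec {R n : Type*} [CommRing R] [Fintype n] [DecidableEq n] (c : R)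
    (x : n → R) : (c • of (fun _ _ : n => (1 : R)) - 1) *ᵥ x = fun p => c * ∑ q, x q - x p := by
  rw [sub_mulVec, smul_mulVec, one_mulVec]
  ext p
  simp [mulVec, dotProduct, mul_sum]

lemma swap_mul_smul_of_one_sub_one_mulVec_eq_neg_iff {K : Type*} [Field K] (h2 : (2 : K) ≠ 0)
    {c : K} (hc : c ≠ 0) (x : Fin 2 × ι → K) :
    (blockDiagonal (fun _ : ι => !![(0 : K), 1; 1, 0]) * (c • of (fun _ _ => (1 : K)) - 1)) *ᵥ x
        = -x ↔ (∀ j, x (1, j) = x (0, j)) ∧ ∑ j, x (0, j) = 0 := by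
  have hsum : ∑ p, x p = ∑ j, x (0, j) + ∑ j, x (1, j) := by
    rw [Fintype.sum_prod_type, Fin.sum_univ_two]
  simp only [← mulVec_mulVec, funext_iff, Prod.forall, Fin.forall_fin_two,
    blockDiagonal_swap_mulVec_apply, smul_of_one_sub_one_mulVec, Pi.neg_apply, sub_zero, sub_self,
    hsum]
  constructor
  · rintro ⟨h0, h1⟩
    have hS : ∑ j, x (0, j) + ∑ j, x (1, j) = 0 := by
      rcases isEmpty_or_nonempty ι with hι | ⟨⟨j⟩⟩
      · simp
      · have h : 2 * c * (∑ j, x (0, j) + ∑ j, x (1, j)) = 0 := by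
          linear_combination h0 j + h1 j
        simpa [h2, hc] using h
    have hsym (j : ι) : x (1, j) = x (0, j) := by linear_combination c * hS - h0 j
    refine ⟨hsym, ?_⟩
    rw [sum_congr rfl fun j _ => hsym j, ← two_mul] at hS
    exact (mul_eq_zero.1 hS).resolve_left h2
  · rintro ⟨hsym, hS⟩
    simp [hsym, hS]

end SwapCoin

lemma geom_sum_eq_ite_of_pow_eq_one {K : Type*} [Field K] [DecidableEq K] {μ : K} {n : ℕ}
    (h : μ ^ n = 1) :
    ∑ i ∈ range n, μ ^ i = if μ = 1 then (n : K) else 0 := by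
  split_ifs with hμ
  · simp [hμ]
  · rw [geom_sum_eq hμ, h, sub_self, zero_div]

noncomputable def doubledFourierVec (d : ℕ) (ω : ℂ) (m : ℕ) : Fin 2 × Fin d → ℂ :=
  fun p => (1 / (Real.sqrt (2 * d) : ℂ)) * ω ^ (m * (p.2 : ℕ))

namespace IsPrimitiveRoot

variable {d : ℕ} {ω : ℂ}

lemma star_pow_mul_pow_eq_one_iff (hω : IsPrimitiveRoot ω d) {a b : ℕ} (ha : a < d)
    (hb : b < d) : star (ω ^ a) * ω ^ b = 1 ↔ a = b := by
  have hnorm : ‖ω ^ a‖ = 1 := by rw [norm_pow, hω.norm'_eq_one (by omega), one_pow]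
  rw [Complex.star_def, ← Complex.inv_eq_conj hnorm,
    inv_mul_eq_one₀ (pow_ne_zero a (hω.ne_zero (by omega)))]
  exact ⟨fun h => hω.pow_inj ha hb h, fun h => h ▸ rfl⟩

lemma sum_star_pow_mul_pow (hω : IsPrimitiveRoot ω d) {a b : ℕ} (ha : a < d) (hb : b < d) :
    ∑ m : Fin d, star (ω ^ (a * m)) * ω ^ (b * m) = if a = b then (d : ℂ) else 0 := by
  have hpow : (star (ω ^ a) * ω ^ b) ^ d = 1 := by
    rw [mul_pow, ← star_pow, ← pow_mul, ← pow_mul, mul_comm a, mul_comm b, pow_mul, pow_mul,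
      hω.pow_eq_one, one_pow, one_pow, star_one, one_mul]
  have hterm (m : ℕ) : star (ω ^ (a * m)) * ω ^ (b * m) = (star (ω ^ a) * ω ^ b) ^ m := by
    rw [mul_pow, ← star_pow, pow_mul, pow_mul]
  simp_rw [hterm]
  rw [Fin.sum_univ_eq_sum_range (fun m => (star (ω ^ a) * ω ^ b) ^ m),
    geom_sum_eq_ite_of_pow_eq_one hpow]
  exact if_congr (hω.star_pow_mul_pow_eq_one_iff ha hb) rfl rfl

lemma sum_pow_mul_eq_zero (hω : IsPrimitiveRoot ω d) {a : ℕ} (ha₀ : 0 < a) (ha : a < d) :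
    ∑ m : Fin d, ω ^ (a * m) = 0 := by
  have hpow : (ω ^ a) ^ d = 1 := by rw [← pow_mul, mul_comm, pow_mul, hω.pow_eq_one, one_pow]
  simp_rw [pow_mul]
  rw [Fin.sum_univ_eq_sum_range (fun m => (ω ^ a) ^ m), geom_sum_eq_ite_of_pow_eq_one hpow,
    if_neg (hω.pow_ne_one_of_pos_of_lt ha₀.ne' ha)]

lemma sum_fourierCoeff_mul_pow (hω : IsPrimitiveRoot ω d) (y : Fin d → ℂ) (j : Fin d) :
    ∑ m : Fin d, (∑ k : Fin d, star (ω ^ (m * k : ℕ)) * y k) * ω ^ (m * j : ℕ) = d * y j := by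
  calc ∑ m : Fin d, (∑ k : Fin d, star (ω ^ (m * k : ℕ)) * y k) * ω ^ (m * j : ℕ)
      = ∑ k : Fin d, y k * ∑ m : Fin d, star (ω ^ (k * m : ℕ)) * ω ^ (j * m : ℕ) := by
        simp_rw [sum_mul, mul_sum]
        rw [sum_comm]
        refine sum_congr rfl fun k _ => sum_congr rfl fun m _ => ?_
        rw [mul_comm (m : ℕ) k, mul_comm (m : ℕ) j]
        ring
    _ = ∑ k : Fin d, y k * if k = j then (d : ℂ) else 0 := by
        simp_rw [hω.sum_star_pow_mul_pow (Fin.is_lt _) j.isLt, Fin.val_inj]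
    _ = d * y j := by simp [mul_comm]

lemma exists_sum_pow_eq_of_sum_eq_zero (hω : IsPrimitiveRoot ω d) (y : Fin d → ℂ)
    (hy : ∑ k, y k = 0) :
    ∃ c : Fin (d - 1) → ℂ, ∀ j : Fin d, ∑ ℓ : Fin (d - 1), c ℓ * ω ^ ((ℓ + 1) * j : ℕ) = y j := by
  let F (m : ℕ) : ℂ := ∑ k : Fin d, star (ω ^ (m * k : ℕ)) * y k
  refine ⟨fun ℓ => F (ℓ + 1) / d, fun j => ?_⟩
  obtain ⟨n, rfl⟩ := Nat.exists_eq_add_one_of_ne_zero j.pos.ne'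
  have hinv := hω.sum_fourierCoeff_mul_pow y j
  rw [Fin.sum_univ_eq_sum_range (fun m => F m * ω ^ (m * j : ℕ)), sum_range_succ'] at hinv
  have hF0 : F 0 = 0 := by simp [F, hy]
  rw [hF0, zero_mul, add_zero] at hinv
  rw [Fin.sum_univ_eq_sum_range (fun ℓ => F (ℓ + 1) / (n + 1 : ℕ) * ω ^ ((ℓ + 1) * j : ℕ)),
    Nat.add_sub_cancel]
  simp_rw [div_mul_eq_mul_div]
  rw [← sum_div, hinv, mul_div_cancel_left₀ _ (Nat.cast_ne_zero.2 n.succ_ne_zero)]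

lemma sum_star_doubledFourierVec_mul (hω : IsPrimitiveRoot ω d) {a b : ℕ} (ha : a < d)
    (hb : b < d) :
    ∑ p, star (doubledFourierVec d ω a p) * doubledFourierVec d ω b p =
      if a = b then 1 else 0 := by
  have hd : (d : ℂ) ≠ 0 := Nat.cast_ne_zero.2 (by omega)
  have hsq : (Real.sqrt (2 * d) : ℂ) * Real.sqrt (2 * d) = 2 * d := by
    rw [← Complex.ofReal_mul, Real.mul_self_sqrt (by positivity)]
    norm_cast
  have hnorm :
      star (1 / (Real.sqrt (2 * d) : ℂ)) * (1 / (Real.sqrt (2 * d) : ℂ)) = 1 / (2 * d) := by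
    rw [Complex.star_def, map_div₀, map_one, Complex.conj_ofReal, div_mul_div_comm, one_mul, hsq]
  calc ∑ p, star (doubledFourierVec d ω a p) * doubledFourierVec d ω b p
      = ∑ _s : Fin 2, 1 / (2 * d) * ∑ j : Fin d, star (ω ^ (a * j)) * ω ^ (b * j) := by
        rw [Fintype.sum_prod_type]
        refine sum_congr rfl fun s _ => ?_
        rw [mul_sum]
        refine sum_congr rfl fun j _ => ?_
        rw [doubledFourierVec, doubledFourierVec, star_mul', ← hnorm]
        ring
    _ = if a = b then 1 else 0 := by
        rw [sum_const, card_univ, Fintype.card_fin, hω.sum_star_pow_mul_pow ha hb]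
        split_ifs
        · field_simp
          norm_num
        · simp

lemma sum_doubledFourierVec_eq_zero (hω : IsPrimitiveRoot ω d) {a : ℕ} (ha₀ : 0 < a)
    (ha : a < d) : ∑ j, doubledFourierVec d ω a (0, j) = 0 := by
  simp only [doubledFourierVec, ← mul_sum, hω.sum_pow_mul_eq_zero ha₀ ha, mul_zero]

lemma mem_span_doubledFourierVec (hω : IsPrimitiveRoot ω d) {x : Fin 2 × Fin d → ℂ}
    (hsym : ∀ j, x (1, j) = x (0, j)) (hsum : ∑ j, x (0, j) = 0) :
    x ∈ Submodule.span ℂ (Set.range fun ℓ : Fin (d - 1) => doubledFourierVec d ω (ℓ + 1)) := by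
  obtain ⟨c, hc⟩ := hω.exists_sum_pow_eq_of_sum_eq_zero (fun j => x (0, j)) hsum
  rw [Submodule.mem_span_range_iff_exists_fun]
  refine ⟨fun ℓ => Real.sqrt (2 * d) * c ℓ, ?_⟩
  ext ⟨s, j⟩
  have hs : x (s, j) = x (0, j) := by
    fin_cases s
    · rfl
    · exact hsym j
  rw [hs, ← hc j, Finset.sum_apply]
  refine sum_congr rfl fun ℓ _ => ?_
  have hd : (0 : ℝ) < d := Nat.cast_pos.2 j.pos
  have : (Real.sqrt (2 * d) : ℂ) ≠ 0 := Complex.ofReal_ne_zero.2 (by positivity)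
  simp only [doubledFourierVec, Pi.smul_apply, smul_eq_mul]
  field_simp

end IsPrimitiveRoot

/-- The `d-1` vectors `(1/√(2d))·[1, ω^ℓ, …, ω^{(d-1)ℓ}] ⊗ [1,1]` (with `ω = e^{2πi/d}`)
form an orthonormal basis of `ker(-1 - C'_d)` where `C'_d = σ · Gr(2d)`. -/
theorem moving_shift_coin_neg_eigenbasis (d : ℕ) (hd : 2 ≤ d)
    (σ Gr C' : Matrix (Fin 2 × Fin d) (Fin 2 × Fin d) ℂ)
    (hσ : σ = Matrix.blockDiagonal (fun _ : Fin d => !![(0 : ℂ), 1; 1, 0]))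
    (hGr : Gr = ((2 : ℂ) / (2 * d)) • Matrix.of (fun _ _ => (1 : ℂ)) - 1)
    (hC' : C' = σ * Gr)
    (ω : ℂ) (hω : ω = Complex.exp (2 * Real.pi * Complex.I / d))
    (v : Fin (d - 1) → (Fin 2 × Fin d → ℂ))
    (hv : ∀ (ℓ : Fin (d - 1)) (s : Fin 2) (j : Fin d),
      v ℓ (s, j) = (1 / (Real.sqrt (2 * d) : ℂ)) * ω ^ (((ℓ : ℕ) + 1) * (j : ℕ))) :
    (∀ ℓ ℓ', ∑ x, star (v ℓ x) * v ℓ' x = if ℓ = ℓ' then 1 else 0) ∧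
    (∀ ℓ, C'.mulVec (v ℓ) = -(v ℓ)) ∧
    (∀ x : Fin 2 × Fin d → ℂ, C'.mulVec x = -x →
      x ∈ Submodule.span ℂ (Set.range v)) := by
  have hprim : IsPrimitiveRoot ω d := hω ▸ Complex.isPrimitiveRoot_exp d (by omega)
  have hc : (2 : ℂ) / (2 * d) ≠ 0 := div_ne_zero two_ne_zero (by norm_cast; omega)
  have heig := swap_mul_smul_of_one_sub_one_mulVec_eq_neg_iff (ι := Fin d) two_ne_zero hc
  obtain rfl : v = fun ℓ : Fin (d - 1) => doubledFourierVec d ω (ℓ + 1) :=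
    funext fun ℓ => funext fun ⟨s, j⟩ => hv ℓ s j
  subst hσ hGr hC'
  refine ⟨fun ℓ ℓ' => ?_, fun ℓ => ?_, fun x hx => ?_⟩
  · rw [hprim.sum_star_doubledFourierVec_mul (by omega) (by omega)]
    simp [Fin.ext_iff]
  · exact (heig _).2 ⟨fun j => rfl, hprim.sum_doubledFourierVec_eq_zero (by omega) (by omega)⟩
  · obtain ⟨hsym, hsum⟩ := (heig x).1 hx
    exact hprim.mem_span_doubledFourierVec hsym hsum
end

section
/- Let U, L, Λ be linear maps with UL = LΛ, where L: ℂ^{2q} → H and Λ: ℂ^{2q} → ℂ^{2q} is invertible, and suppose ker L = ker(κ'² I − Λ²). Then for λ ∉ {κ', −κ'}, a nonzero vector ψ ∈ ran L satisfies Uψ = λψ if and only if ψ = Lφ for some φ with Λφ = λφ and φ ∉ ker L. -/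
open Matrix

/- `ker f = ker (c - A²)` is `A`-invariant, so `(A - λ) x ∈ ker f` gives `f (A² x) = λ² f x`.
Hence `y = (c - λ²)⁻¹ (c - A²) x` has the same image as `x`, and `(A - λ) y = 0` because
`c - A²` kills `(A - λ) x`. -/
theorem LinearMap.exists_eigenvector_apply_eq_apply {K M N : Type*} [Field K] [AddCommGroup M]
    [Module K M] [AddCommGroup N] [Module K N] {f : M →ₗ[K] N} {A : Module.End K M}
    {c lam : K} (hc : lam ^ 2 ≠ c) (hker : ∀ x, f x = 0 ↔ (c • 1 - A * A) x = 0) {x : M}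
    (hx : f (A x) = lam • f x) : ∃ y, f y = f x ∧ A y = lam • y := by
  set P : Module.End K M := c • 1 - A * A
  have hPA : Commute P A :=
    ((Commute.one_left A).smul_left c).sub_left ((Commute.refl A).mul_left (.refl A))
  have hA_ker : ∀ z, f z = 0 → f (A z) = 0 := fun z hz =>
    (hker _).2 <| by rw [← Module.End.mul_apply, hPA.eq, Module.End.mul_apply, (hker z).1 hz,
      map_zero]
  have hx₁ : f (A x - lam • x) = 0 := by rw [map_sub, map_smul, hx, sub_self]
  have hx₂ : f (A (A x)) = lam ^ 2 • f x := by
    have := hA_ker _ hx₁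
    rw [map_sub, map_smul, map_sub, map_smul, sub_eq_zero] at this
    rw [this, hx, smul_smul, sq]
  have hc' : c - lam ^ 2 ≠ 0 := sub_ne_zero.2 hc.symm
  refine ⟨(c - lam ^ 2)⁻¹ • P x, ?_, ?_⟩
  · have hfP : f (P x) = (c - lam ^ 2) • f x := by
      simp only [P, LinearMap.sub_apply, LinearMap.smul_apply, Module.End.one_apply,
        Module.End.mul_apply, map_sub, map_smul, hx₂, sub_smul]
    rw [map_smul, hfP, smul_smul, inv_mul_cancel₀ hc', one_smul]
  · have hPx : A (P x) = lam • P x := by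
      have := (hker _).1 hx₁
      rwa [map_sub, map_smul, sub_eq_zero, ← Module.End.mul_apply, hPA.eq] at this
    rw [map_smul, hPx, smul_comm]

theorem eigenvector_lifting_general (N q : ℕ) (κ' lam : ℂ)
    (U : Matrix (Fin N) (Fin N) ℂ)
    (L : Matrix (Fin N) (Fin (2 * q)) ℂ)
    (Λ : Matrix (Fin (2 * q)) (Fin (2 * q)) ℂ)
    (hUL : U * L = L * Λ)
    (hker : ∀ φ : Fin (2 * q) → ℂ,
      L.mulVec φ = 0 ↔
        (κ' ^ 2 • (1 : Matrix (Fin (2 * q)) (Fin (2 * q)) ℂ) - Λ * Λ).mulVec φ = 0)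
    (hlam : lam ≠ κ' ∧ lam ≠ -κ') :
    ∀ ψ : Fin N → ℂ,
      (ψ ≠ 0 ∧ (∃ φ₀, ψ = L.mulVec φ₀) ∧ U.mulVec ψ = lam • ψ) ↔
        ∃ φ, ψ = L.mulVec φ ∧ Λ.mulVec φ = lam • φ ∧ L.mulVec φ ≠ 0 := by
  have hU : ∀ φ, U *ᵥ (L *ᵥ φ) = L *ᵥ (Λ *ᵥ φ) := fun φ => by
    rw [mulVec_mulVec, hUL, ← mulVec_mulVec]
  have hc : lam ^ 2 ≠ κ' ^ 2 := by
    rw [Ne, sq_eq_sq_iff_eq_or_eq_neg, not_or]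
    exact hlam
  have hker' : ∀ φ, toLin' L φ = 0 ↔ (κ' ^ 2 • 1 - toLin' Λ * toLin' Λ) φ = 0 := fun φ => by
    simpa [sub_mulVec, smul_mulVec, mulVec_mulVec] using hker φ
  intro ψ
  constructor
  · rintro ⟨hψ, ⟨φ₀, rfl⟩, hUψ⟩
    obtain ⟨φ, hLφ, hΛφ⟩ := LinearMap.exists_eigenvector_apply_eq_apply hc hker'
      (x := φ₀) (by rw [toLin'_apply, toLin'_apply, toLin'_apply, ← hU, hUψ])
    rw [toLin'_apply, toLin'_apply] at hLφ
    rw [toLin'_apply] at hΛφ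
    exact ⟨φ, hLφ.symm, hΛφ, hLφ ▸ hψ⟩
  · rintro ⟨φ, rfl, hΛφ, hLφ⟩
    exact ⟨hLφ, ⟨φ, rfl⟩, by rw [hU, hΛφ, mulVec_smul]⟩

/-- Abstract eigenvector lifting: if `UL = LΛ` with `Λ` invertible and
`ker L = ker(κ'² I - Λ²)`, then for `λ ∉ {κ', -κ'}`, a nonzero `ψ ∈ ran L` is a
`λ`-eigenvector of `U` iff `ψ = Lφ` for some `φ` with `Λφ = λφ` and `φ ∉ ker L`. -/
theorem eigenvector_lifting (N q : ℕ) (κ' lam : ℂ)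
    (hκ' : ‖κ'‖ = 1)
    (U : Matrix (Fin N) (Fin N) ℂ)
    (L : Matrix (Fin N) (Fin (2 * q)) ℂ)
    (Λ : Matrix (Fin (2 * q)) (Fin (2 * q)) ℂ)
    (hUL : U * L = L * Λ) (hΛ : IsUnit Λ)
    (hker : ∀ φ : Fin (2 * q) → ℂ,
      L.mulVec φ = 0 ↔
        (κ' ^ 2 • (1 : Matrix (Fin (2 * q)) (Fin (2 * q)) ℂ) - Λ * Λ).mulVec φ = 0)
    (hlam : lam ≠ κ' ∧ lam ≠ -κ') :
    ∀ ψ : Fin N → ℂ,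
      (ψ ≠ 0 ∧ (∃ φ₀, ψ = L.mulVec φ₀) ∧ U.mulVec ψ = lam • ψ) ↔
        ∃ φ, ψ = L.mulVec φ ∧ Λ.mulVec φ = lam • φ ∧ L.mulVec φ ≠ 0 :=
  eigenvector_lifting_general N q κ' lam U L Λ hUL hker hlam
end
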